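/- arXiv:2102.12202 — 2 statements merged into one kernel-verified Lean document; each statement's English description precedes it below -/
import Mathlib

section
/- Let E be a finite-dimensional complex Hermitian space, h : E → ℝ of class C¹, β > 0, and assume z_β := ∫_E e^{-βh(u)} dL < ∞ where dL is Lebesgue measure. Then the Gibbs probability measure μ_β = z_β^{-1} e^{-βh} dL satisfies: for all compactly supported smooth functions F, G : E → ℝ, ∫_E {F,G}(u) dμ_β = β ∫_E {F,h}(u) G(u) dμ_β. -/
open MeasureTheory

/-- The Poisson bracket `{F,G}(u) = Σ_j (∂F/∂e_j ∂G/∂f_j − ∂G/∂e_j ∂F/∂f_j)`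
with respect to the real orthonormal basis `{b j, i • b j}` of a complex
Hermitian space. -/
noncomputable def poissonBracket {E : Type*} [NormedAddCommGroup E]
    [InnerProductSpace ℂ E] {n : ℕ} (b : OrthonormalBasis (Fin n) ℂ E)
    (F G : E → ℝ) (u : E) : ℝ :=
  ∑ j : Fin n,
    (fderiv ℝ F u (b j) * fderiv ℝ G u (Complex.I • b j)
      - fderiv ℝ G u (b j) * fderiv ℝ F u (Complex.I • b j))

/-- The Gibbs measure `z_β⁻¹ e^{-βh} dL`. -/
noncomputable def gibbsMeasure {E : Type*} [NormedAddCommGroup E]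
    [InnerProductSpace ℂ E] [MeasurableSpace E]
    (L : Measure E) (β : ℝ) (h : E → ℝ) : Measure E :=
  (ENNReal.ofReal (∫ u, Real.exp (-β * h u) ∂L))⁻¹ •
    L.withDensity (fun u => ENNReal.ofReal (Real.exp (-β * h u)))

section Aux

variable {E : Type*} [NormedAddCommGroup E] [NormedSpace ℝ E]
  [FiniteDimensional ℝ E] [MeasurableSpace E] [BorelSpace E]
  (L : Measure E) [L.IsAddHaarMeasure]
  {F G h : E → ℝ} {β : ℝ}

/-- The integral of a directional derivative of a compactly supported `C¹` function
with respect to an additive Haar measure vanishes. -/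
lemma integral_fderiv_apply_eq_zero' {Φ : E → ℝ} (hΦ : ContDiff ℝ 1 Φ)
    (hc : HasCompactSupport Φ) (v : E) : ∫ u, fderiv ℝ Φ u v ∂L = 0 := by
  have hΦ' : Continuous fun u => fderiv ℝ Φ u v :=
    (hΦ.continuous_fderiv one_ne_zero).clm_apply continuous_const
  have h1 : Integrable (fun x => fderiv ℝ (fun _ : E => (1 : ℝ)) x v * Φ x) L := by
    simpa [fderiv_fun_const] using (integrable_zero E ℝ L)
  have h2 : Integrable (fun x => (1 : ℝ) * fderiv ℝ Φ x v) L := by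
    simpa using hΦ'.integrable_of_hasCompactSupport (hc.fderiv_apply ℝ v)
  have h3 : Integrable (fun x => (1 : ℝ) * Φ x) L := by
    simpa using hΦ.continuous.integrable_of_hasCompactSupport hc
  have := integral_mul_fderiv_eq_neg_fderiv_mul_of_integrable h1 h2 h3
    (fun x _ => (differentiable_const (1 : ℝ)) x) (fun x _ => (hΦ.differentiable one_ne_zero) x) (v := v)
  simpa [fderiv_fun_const] using this

omit [FiniteDimensional ℝ E] [MeasurableSpace E] [BorelSpace E] in
lemma fderiv_term_formula' (hF : ContDiff ℝ (⊤ : ℕ∞) F) (hG : ContDiff ℝ (⊤ : ℕ∞) G)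
    (hh : ContDiff ℝ 1 h) (w v u : E) :
    fderiv ℝ (fun u => fderiv ℝ F u w * (G u * Real.exp (-β * h u))) u v =
      fderiv ℝ (fderiv ℝ F) u v w * (G u * Real.exp (-β * h u))
        + fderiv ℝ F u w * (fderiv ℝ G u v * Real.exp (-β * h u)
            + G u * (Real.exp (-β * h u) * (-β * fderiv ℝ h u v))) := by
  have hF' : Differentiable ℝ (fderiv ℝ F) :=
    (hF.fderiv_right (m := 1) (by exact WithTop.coe_le_coe.mpr le_top)).differentiable one_ne_zero
  have h1 : HasFDerivAt (fun u => fderiv ℝ F u w)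
      ((fderiv ℝ (fderiv ℝ F) u).flip w) u := by
    have := (hF'.differentiableAt.hasFDerivAt).clm_apply (hasFDerivAt_const w u)
    simpa using this
  have h2 : HasFDerivAt G (fderiv ℝ G u) u :=
    ((hG.differentiable (by simp)) u).hasFDerivAt
  have h3 : HasFDerivAt (fun u => Real.exp (-β * h u))
      (Real.exp (-β * h u) • ((-β) • fderiv ℝ h u)) u :=
    ((((hh.differentiable one_ne_zero) u).hasFDerivAt).const_mul (-β)).exp
  have H := (h1.fun_mul (h2.fun_mul h3)).fderiv
  rw [H]
  simp only [ContinuousLinearMap.add_apply, ContinuousLinearMap.smul_apply,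
    ContinuousLinearMap.flip_apply, smul_eq_mul]
  ring

lemma int_term1 (hF : ContDiff ℝ (⊤ : ℕ∞) F) (hFc : HasCompactSupport F)
    (hG : ContDiff ℝ (⊤ : ℕ∞) G) (hh : ContDiff ℝ 1 h) (e w : E) :
    Integrable (fun u =>
      (fderiv ℝ F u e * fderiv ℝ G u w - fderiv ℝ G u e * fderiv ℝ F u w)
        * Real.exp (-β * h u)) L := by
  have cF' : Continuous (fderiv ℝ F) := hF.continuous_fderiv (by simp)
  have cG' : Continuous (fderiv ℝ G) := hG.continuous_fderiv (by simp)
  have cρ : Continuous fun u => Real.exp (-β * h u) :=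
    Real.continuous_exp.comp (continuous_const.mul hh.continuous)
  apply Continuous.integrable_of_hasCompactSupport
  · exact (((cF'.clm_apply continuous_const).mul (cG'.clm_apply continuous_const)).sub
      ((cG'.clm_apply continuous_const).mul (cF'.clm_apply continuous_const))).mul cρ
  · apply HasCompactSupport.mul_right
    apply (hFc.fderiv ℝ).mono'
    intro u hu
    contrapose! hu
    have h0 : fderiv ℝ F u = 0 := image_eq_zero_of_notMem_tsupport hu
    simp [Function.mem_support, h0]

lemma int_term2 (hF : ContDiff ℝ (⊤ : ℕ∞) F) (hG : ContDiff ℝ (⊤ : ℕ∞) G)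
    (hGc : HasCompactSupport G) (hh : ContDiff ℝ 1 h) (e w : E) :
    Integrable (fun u =>
      (fderiv ℝ F u e * fderiv ℝ h u w - fderiv ℝ h u e * fderiv ℝ F u w)
        * G u * Real.exp (-β * h u)) L := by
  have cF' : Continuous (fderiv ℝ F) := hF.continuous_fderiv (by simp)
  have ch' : Continuous (fderiv ℝ h) := hh.continuous_fderiv one_ne_zero
  have cρ : Continuous fun u => Real.exp (-β * h u) :=
    Real.continuous_exp.comp (continuous_const.mul hh.continuous)
  apply Continuous.integrable_of_hasCompactSupport
  · exact ((((cF'.clm_apply continuous_const).mul (ch'.clm_apply continuous_const)).sub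
      ((ch'.clm_apply continuous_const).mul (cF'.clm_apply continuous_const))).mul
        hG.continuous).mul cρ
  · exact ((hGc.mul_left).mul_right)

/-- The key per-direction integration-by-parts identity. -/
lemma key_identity (hF : ContDiff ℝ (⊤ : ℕ∞) F) (hFc : HasCompactSupport F)
    (hG : ContDiff ℝ (⊤ : ℕ∞) G) (hGc : HasCompactSupport G)
    (hh : ContDiff ℝ 1 h) (e w : E) :
    ∫ u, (fderiv ℝ F u e * fderiv ℝ G u w - fderiv ℝ G u e * fderiv ℝ F u w)
        * Real.exp (-β * h u) ∂L =
      β * ∫ u, (fderiv ℝ F u e * fderiv ℝ h u w - fderiv ℝ h u e * fderiv ℝ F u w)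
        * G u * Real.exp (-β * h u) ∂L := by
  set ρ : E → ℝ := fun u => Real.exp (-β * h u) with hρ
  have ρC1 : ContDiff ℝ 1 ρ :=
    Real.contDiff_exp.comp (contDiff_const.mul hh)
  have hAC : ∀ y : E, ContDiff ℝ 1 fun u => fderiv ℝ F u y := fun y =>
    ((hF.fderiv_right (m := 1) (by exact WithTop.coe_le_coe.mpr le_top)).clm_apply contDiff_const).of_le le_rfl
  have hΦ : ∀ y : E, ContDiff ℝ 1 fun u => fderiv ℝ F u y * (G u * ρ u) := fun y =>
    (hAC y).mul ((hG.of_le (by exact WithTop.coe_le_coe.mpr le_top)).mul ρC1)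
  have hΦc : ∀ y : E, HasCompactSupport fun u => fderiv ℝ F u y * (G u * ρ u) := fun y =>
    ((hGc.mul_right (f' := ρ)).mul_left (f := fun u => fderiv ℝ F u y))
  have A := integral_fderiv_apply_eq_zero' L (hΦ w) (hΦc w) e
  have B := integral_fderiv_apply_eq_zero' L (hΦ e) (hΦc e) w
  have symm : ∀ u : E, fderiv ℝ (fderiv ℝ F) u w e = fderiv ℝ (fderiv ℝ F) u e w :=
    fun u => (hF.contDiffAt.isSymmSndFDerivAt (by simp [minSmoothness_of_isRCLikeNormedField]; exact WithTop.coe_le_coe.mpr le_top)).eq w e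
  have point : ∀ u : E,
      fderiv ℝ (fun u => fderiv ℝ F u e * (G u * ρ u)) u w
        - fderiv ℝ (fun u => fderiv ℝ F u w * (G u * ρ u)) u e =
      (fderiv ℝ F u e * fderiv ℝ G u w - fderiv ℝ G u e * fderiv ℝ F u w) * ρ u
        - β * ((fderiv ℝ F u e * fderiv ℝ h u w - fderiv ℝ h u e * fderiv ℝ F u w)
            * G u * ρ u) := by
    intro u
    rw [fderiv_term_formula' hF hG hh e w u, fderiv_term_formula' hF hG hh w e u, symm u]
    ring
  have int1 := int_term1 (β := β) L hF hFc hG hh e w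
  have int2 := int_term2 (β := β) L hF hG hGc hh e w
  have intΦ : ∀ y z : E, Integrable
      (fun u => fderiv ℝ (fun u => fderiv ℝ F u y * (G u * ρ u)) u z) L := fun y z =>
    (((hΦ y).continuous_fderiv one_ne_zero).clm_apply continuous_const).integrable_of_hasCompactSupport
      ((hΦc y).fderiv_apply ℝ z)
  have hzero : ∫ u,
      (fderiv ℝ (fun u => fderiv ℝ F u e * (G u * ρ u)) u w
        - fderiv ℝ (fun u => fderiv ℝ F u w * (G u * ρ u)) u e) ∂L = 0 := by
    rw [integral_sub (intΦ e w) (intΦ w e), A, B, sub_zero]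
  rw [funext point] at hzero
  rw [integral_sub int1 (int2.const_mul β), integral_const_mul] at hzero
  linarith

end Aux

/-- Integration against the Gibbs measure reduces to a weighted Lebesgue integral. -/
lemma integral_gibbs {E : Type*} [NormedAddCommGroup E]
    [InnerProductSpace ℂ E] [MeasurableSpace E] [OpensMeasurableSpace E]
    (L : Measure E) (β : ℝ) {h : E → ℝ} (hh : Continuous h) (f : E → ℝ) :
    ∫ u, f u ∂(gibbsMeasure L β h) =
      ((ENNReal.ofReal (∫ u, Real.exp (-β * h u) ∂L))⁻¹).toReal *
        ∫ u, f u * Real.exp (-β * h u) ∂L := by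
  have cρ : Continuous fun u => Real.exp (-β * h u) :=
    Real.continuous_exp.comp (continuous_const.mul hh)
  have hmeas : Measurable fun u => (Real.exp (-β * h u)).toNNReal :=
    cρ.measurable.real_toNNReal
  rw [gibbsMeasure, integral_smul_measure]
  have hd : (fun u => ENNReal.ofReal (Real.exp (-β * h u)))
      = fun u => ((Real.exp (-β * h u)).toNNReal : ENNReal) := rfl
  rw [hd, integral_withDensity_eq_integral_smul hmeas]
  congr 1
  refine integral_congr_ae (Filter.Eventually.of_forall fun u => ?_)
  simp only [NNReal.smul_def, smul_eq_mul]
  rw [Real.coe_toNNReal _ (Real.exp_pos _).le, mul_comm]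

/-- if `h : E → ℝ` is `C¹` on a finite-dimensional complex Hermitian
space and `e^{-βh}` is Lebesgue-integrable, then the Gibbs probability measure
`μ_β = z_β⁻¹ e^{-βh} dL` satisfies the KMS identity
`∫ {F,G} dμ_β = β ∫ {F,h} G dμ_β` for all compactly supported smooth `F, G`. -/
theorem stmt1 {E : Type*} [NormedAddCommGroup E] [InnerProductSpace ℂ E]
    [FiniteDimensional ℂ E] [MeasurableSpace E] [BorelSpace E]
    {n : ℕ} (b : OrthonormalBasis (Fin n) ℂ E)
    (L : Measure E) [L.IsAddHaarMeasure]
    (h : E → ℝ) (hh : ContDiff ℝ 1 h) (β : ℝ) (hβ : 0 < β)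
    (hint : Integrable (fun u => Real.exp (-β * h u)) L) :
    ∀ F G : E → ℝ, ContDiff ℝ (⊤ : ℕ∞) F → HasCompactSupport F →
      ContDiff ℝ (⊤ : ℕ∞) G → HasCompactSupport G →
      ∫ u, poissonBracket b F G u ∂(gibbsMeasure L β h) =
        β * ∫ u, poissonBracket b F h u * G u ∂(gibbsMeasure L β h) := by
  intro F G hF hFc hG hGc
  rw [integral_gibbs L β hh.continuous, integral_gibbs L β hh.continuous]
  have key : ∫ u, poissonBracket b F G u * Real.exp (-β * h u) ∂L =
      β * ∫ u, poissonBracket b F h u * G u * Real.exp (-β * h u) ∂L := by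
    have e1 : (fun u => poissonBracket b F G u * Real.exp (-β * h u)) =
        fun u => ∑ j : Fin n,
          (fderiv ℝ F u (b j) * fderiv ℝ G u (Complex.I • b j)
            - fderiv ℝ G u (b j) * fderiv ℝ F u (Complex.I • b j))
              * Real.exp (-β * h u) := by
      funext u; rw [poissonBracket, Finset.sum_mul]
    have e2 : (fun u => poissonBracket b F h u * G u * Real.exp (-β * h u)) =
        fun u => ∑ j : Fin n,
          (fderiv ℝ F u (b j) * fderiv ℝ h u (Complex.I • b j)
            - fderiv ℝ h u (b j) * fderiv ℝ F u (Complex.I • b j))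
              * G u * Real.exp (-β * h u) := by
      funext u; rw [poissonBracket, Finset.sum_mul, Finset.sum_mul]
    rw [e1, e2,
      integral_finset_sum _ (fun j _ => int_term1 L hF hFc hG hh (b j) (Complex.I • b j)),
      integral_finset_sum _ (fun j _ => int_term2 L hF hG hGc hh (b j) (Complex.I • b j)),
      Finset.mul_sum]
    exact Finset.sum_congr rfl fun j _ =>
      key_identity L hF hFc hG hGc hh (b j) (Complex.I • b j)
  rw [key]
  ring
end

section
/- Two-dimensional discrete convolution estimate: let δ ∈ (0,2] and M ≥ 0. For all n ∈ ℤ² and ρ ∈ [0,δ), Σ_{k+ℓ=n, max{|k|,|ℓ|}≥M} ⟨k⟩^{-δ}⟨ℓ⟩^{-2} ≤ C(δ,ρ) · (log⟨n⟩) / (⟨n⟩^{δ−ρ}⟨M⟩^ρ). -/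
/-!
Split the summation set according to which of `|k| ≥ M`, `|n - k| ≥ M` holds and spend a factor
`⟨·⟩^{-ρ} ≤ ⟨M⟩^{-ρ}` of the corresponding weight. This reduces the estimate to the convolution
bound `∑ₖ ⟨k⟩^{-a} ⟨n - k⟩^{-b} ≲ (1 + log ⟨n⟩) ⟨n⟩^{2 - a - b}` for `a, b ≤ 2 < a + b`.
For that bound, where `2⟨k⟩ ≤ ⟨n⟩` the second weight is `≈ ⟨n⟩^{-b}` and
`∑_{⟨k⟩ ≤ ⟨n⟩} ⟨k⟩^{-2} ≲ 1 + log ⟨n⟩`; the case `2⟨n - k⟩ ≤ ⟨n⟩` is symmetric; otherwise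
`⟨k⟩ ≈ ⟨n - k⟩ ≳ ⟨n⟩` and the sum is the convergent tail of `⟨k⟩^{-(a+b)}`. Lattice sums are
compared with one-dimensional sums over the square shells `max |kᵢ| = m`, which contain at most
`8m + 1` points.
-/

/-- Euclidean norm of a lattice point in `ℤ²`. -/
noncomputable def norm2 (k : ℤ × ℤ) : ℝ :=
  Real.sqrt ((k.1 : ℝ) ^ 2 + (k.2 : ℝ) ^ 2)

/-- Japanese bracket `⟨k⟩ = (1 + |k|²)^{1/2}` of a lattice point in `ℤ²`. -/
noncomputable def jap2 (k : ℤ × ℤ) : ℝ :=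
  Real.sqrt (1 + (k.1 : ℝ) ^ 2 + (k.2 : ℝ) ^ 2)

/-- Japanese bracket `⟨M⟩ = (1 + M²)^{1/2}` of a real number. -/
noncomputable def japR (M : ℝ) : ℝ := Real.sqrt (1 + M ^ 2)

open Finset

lemma jap2_sq (k : ℤ × ℤ) : jap2 k ^ 2 = 1 + (k.1 : ℝ) ^ 2 + (k.2 : ℝ) ^ 2 :=
  Real.sq_sqrt (by positivity)

lemma one_le_jap2 (k : ℤ × ℤ) : 1 ≤ jap2 k :=
  Real.one_le_sqrt.mpr (by nlinarith [sq_nonneg (k.1 : ℝ), sq_nonneg (k.2 : ℝ)])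

lemma jap2_pos (k : ℤ × ℤ) : 0 < jap2 k :=
  one_pos.trans_le (one_le_jap2 k)

lemma jap2_add_le (x y : ℤ × ℤ) : jap2 (x + y) ≤ jap2 x + jap2 y := by
  have hx := jap2_sq x
  have hy := jap2_sq y
  have hxy := mul_pos (jap2_pos x) (jap2_pos y)
  have cauchy_schwarz : (x.1 : ℝ) * y.1 + x.2 * y.2 ≤ jap2 x * jap2 y := by
    nlinarith [sq_nonneg ((x.1 : ℝ) * y.2 - x.2 * y.1), sq_nonneg ((x.1 : ℝ) - y.1),
      sq_nonneg ((x.2 : ℝ) - y.2), sq_nonneg (jap2 x * jap2 y - (x.1 * y.1 + x.2 * y.2))]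
  rw [jap2, Real.sqrt_le_left (add_pos (jap2_pos x) (jap2_pos y)).le]
  simp only [Prod.fst_add, Prod.snd_add, Int.cast_add]
  nlinarith

lemma jap2_sub_le (x y : ℤ × ℤ) : jap2 (x - y) ≤ jap2 x + jap2 y := by
  simpa [sub_eq_add_neg, jap2] using jap2_add_le x (-y)

lemma jap2_eq_japR_norm2 (k : ℤ × ℤ) : jap2 k = japR (norm2 k) := by
  rw [jap2, japR, norm2, Real.sq_sqrt (by positivity), add_assoc]

lemma japR_le_jap2 {M : ℝ} {k : ℤ × ℤ} (hM : 0 ≤ M) (h : M ≤ norm2 k) : japR M ≤ jap2 k := by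
  rw [jap2_eq_japR_norm2]
  exact Real.sqrt_le_sqrt (by gcongr)

lemma japR_pos (M : ℝ) : 0 < japR M :=
  Real.sqrt_pos.mpr (by positivity)

def boxIndex (k : ℤ × ℤ) : ℕ := max k.1.natAbs k.2.natAbs

lemma one_add_boxIndex_sq_le (k : ℤ × ℤ) : 1 + (boxIndex k : ℝ) ^ 2 ≤ jap2 k ^ 2 := by
  rw [jap2_sq, boxIndex, Nat.cast_max]
  have h1 : ((k.1.natAbs : ℕ) : ℝ) ^ 2 = (k.1 : ℝ) ^ 2 := by simp
  have h2 : ((k.2.natAbs : ℕ) : ℝ) ^ 2 = (k.2 : ℝ) ^ 2 := by simp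
  rcases max_choice ((k.1.natAbs : ℕ) : ℝ) (k.2.natAbs : ℕ) with h | h <;> rw [h] <;>
    nlinarith [sq_nonneg (k.1 : ℝ), sq_nonneg (k.2 : ℝ)]

lemma boxIndex_le_jap2 (k : ℤ × ℤ) : (boxIndex k : ℝ) ≤ jap2 k := by
  nlinarith [one_add_boxIndex_sq_le k, jap2_pos k, (boxIndex k).cast_nonneg (α := ℝ)]

lemma card_filter_boxIndex_eq_le (F : Finset (ℤ × ℤ)) (m : ℕ) :
    (#{k ∈ F | boxIndex k = m} : ℝ) ≤ 8 * m + 1 := by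
  have hsub : {k ∈ F | boxIndex k = m} ⊆ box m := fun k hk =>
    Int.mem_box.mpr (mem_filter.mp hk).2
  have hbox : #(box m : Finset (ℤ × ℤ)) ≤ 8 * m + 1 := by
    rcases eq_or_ne m 0 with rfl | hm
    · simp
    · rw [Int.card_box hm]; omega
  exact_mod_cast (card_le_card hsub).trans hbox

lemma sum_le_sum_range_shells {F : Finset (ℤ × ℤ)} {N : ℕ} (hF : ∀ k ∈ F, boxIndex k < N)
    {f : ℤ × ℤ → ℝ} {g : ℕ → ℝ} (hg : ∀ m, 0 ≤ g m) (hfg : ∀ k ∈ F, f k ≤ g (boxIndex k)) :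
    ∑ k ∈ F, f k ≤ ∑ m ∈ range N, (8 * m + 1 : ℝ) * g m := by
  calc ∑ k ∈ F, f k ≤ ∑ k ∈ F, g (boxIndex k) := sum_le_sum hfg
    _ = ∑ m ∈ range N, ∑ k ∈ F with boxIndex k = m, g (boxIndex k) :=
        (sum_fiberwise_of_maps_to (fun k hk => mem_range.mpr (hF k hk)) _).symm
    _ = ∑ m ∈ range N, (#{k ∈ F | boxIndex k = m} : ℝ) * g m := by
        refine sum_congr rfl fun m _ => ?_
        rw [sum_congr rfl fun k hk => by rw [(mem_filter.mp hk).2], sum_const, nsmul_eq_mul]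
    _ ≤ ∑ m ∈ range N, (8 * m + 1 : ℝ) * g m :=
        sum_le_sum fun m _ => by gcongr; exacts [hg m, card_filter_boxIndex_eq_le F m]

lemma sum_range_rpow_neg_le {U p : ℝ} (hU : 0 < U) (hp : 0 < p) (N : ℕ) :
    ∑ i ∈ range N, (U + (i + 1 : ℕ)) ^ (-(1 + p)) ≤ U ^ (-p) / p := by
  have hanti : AntitoneOn (fun x : ℝ => x ^ (-(1 + p))) (Set.Icc U (U + N)) :=
    fun x hx y _ hxy => Real.rpow_le_rpow_of_nonpos (hU.trans_le hx.1) hxy (by linarith)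
  refine hanti.sum_le_integral.trans ?_
  have h0 : (0 : ℝ) ∉ Set.uIcc U (U + N) := by
    rw [Set.uIcc_of_le (by linarith [N.cast_nonneg (α := ℝ)])]
    exact fun h => hU.not_ge h.1
  rw [integral_rpow (Or.inr ⟨by linarith, h0⟩), show -(1 + p) + 1 = -p by ring, div_neg,
    ← neg_div, neg_sub]
  have : 0 ≤ (U + N) ^ (-p) := by positivity
  gcongr
  linarith

lemma sum_jap2_rpow_neg_two_le {T : ℝ} (hT : 1 ≤ T) (F : Finset (ℤ × ℤ)) :
    ∑ k ∈ F with jap2 k ≤ T, jap2 k ^ (-2 : ℝ) ≤ 36 * (1 + Real.log T) := by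
  have hshells : ∑ k ∈ F with jap2 k ≤ T, jap2 k ^ (-2 : ℝ)
      ≤ ∑ m ∈ range (⌊T⌋₊ + 1), (8 * m + 1 : ℝ) * (1 + (m : ℝ) ^ 2)⁻¹ := by
    refine sum_le_sum_range_shells (fun k hk => ?_) (fun m => by positivity) (fun k _ => ?_)
    · exact Nat.lt_succ_of_le (Nat.le_floor ((boxIndex_le_jap2 k).trans (mem_filter.mp hk).2))
    · rw [Real.rpow_neg (jap2_pos k).le, Real.rpow_two]
      exact inv_anti₀ (by positivity) (one_add_boxIndex_sq_le k)
  have hterm : ∀ m : ℕ, (8 * m + 1 : ℝ) * (1 + (m : ℝ) ^ 2)⁻¹ ≤ 18 * (m + 1 : ℝ)⁻¹ := by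
    intro m
    rw [← div_eq_mul_inv, ← div_eq_mul_inv, div_le_div_iff₀ (by positivity) (by positivity)]
    nlinarith [sq_nonneg ((m : ℝ) - 1)]
  have hharmonic : ∑ m ∈ range (⌊T⌋₊ + 1), (m + 1 : ℝ)⁻¹ ≤ 1 + Real.log (2 * T) := by
    have h := harmonic_le_one_add_log (⌊T⌋₊ + 1)
    push_cast [harmonic] at h
    refine h.trans ?_
    gcongr
    linarith [Nat.floor_le (zero_le_one.trans hT)]
  have hlog2 : Real.log (2 * T) ≤ 1 + Real.log T := by
    rw [Real.log_mul two_ne_zero (by positivity)]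
    linarith [Real.log_two_lt_d9]
  calc _ ≤ _ := hshells
    _ ≤ ∑ m ∈ range (⌊T⌋₊ + 1), 18 * (m + 1 : ℝ)⁻¹ := sum_le_sum fun m _ => hterm m
    _ ≤ 18 * (1 + Real.log (2 * T)) := by rw [← mul_sum]; gcongr
    _ ≤ 36 * (1 + Real.log T) := by linarith [Real.log_nonneg hT]

lemma sum_jap2_rpow_neg_tail_le {U p : ℝ} (hU : 0 < U) (hp : 0 < p) (F : Finset (ℤ × ℤ)) :
    ∑ k ∈ F with U ≤ jap2 k, jap2 k ^ (-(2 + p)) ≤ 8 * 3 ^ (2 + p) * (U ^ (-p) / p) := by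
  set c := (3 : ℝ) ^ (2 + p)
  have hc : 0 < c := by positivity
  have hshells : ∑ k ∈ F with U ≤ jap2 k, jap2 k ^ (-(2 + p))
      ≤ ∑ m ∈ range ((F.sup boxIndex) + 1), (8 * m + 1 : ℝ) *
          (c * (U + (m + 1 : ℕ)) ^ (-(2 + p))) := by
    refine sum_le_sum_range_shells
      (fun k hk => Nat.lt_succ_of_le (le_sup (mem_filter.mp hk).1)) (fun m => by positivity)
      (fun k hk => ?_)
    have h3k : U + (boxIndex k + 1 : ℕ) ≤ 3 * jap2 k := by
      push_cast
      linarith [(mem_filter.mp hk).2, boxIndex_le_jap2 k, one_le_jap2 k]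
    calc jap2 k ^ (-(2 + p)) = c * (3 * jap2 k) ^ (-(2 + p)) := by
          rw [Real.mul_rpow (by norm_num) (jap2_pos k).le, Real.rpow_neg (by norm_num : (0:ℝ) ≤ 3),
            mul_inv_cancel_left₀ hc.ne']
      _ ≤ c * (U + (boxIndex k + 1 : ℕ)) ^ (-(2 + p)) := by
          have hz : -(2 + p) ≤ 0 := by linarith
          exact mul_le_mul_of_nonneg_left
            (Real.rpow_le_rpow_of_nonpos (by positivity) h3k hz) hc.le
  have hterm : ∀ m : ℕ, (8 * m + 1 : ℝ) * (c * (U + (m + 1 : ℕ)) ^ (-(2 + p)))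
      ≤ 8 * c * (U + (m + 1 : ℕ)) ^ (-(1 + p)) := by
    intro m
    have hpos : 0 < U + (m + 1 : ℕ) := by positivity
    rw [show -(1 + p) = 1 + -(2 + p) by ring, Real.rpow_add hpos, Real.rpow_one]
    calc (8 * m + 1 : ℝ) * (c * (U + (m + 1 : ℕ)) ^ (-(2 + p)))
        ≤ 8 * (U + (m + 1 : ℕ)) * (c * (U + (m + 1 : ℕ)) ^ (-(2 + p))) := by
          gcongr
          push_cast
          linarith
      _ = _ := by ring
  calc _ ≤ _ := hshells
    _ ≤ ∑ m ∈ range ((F.sup boxIndex) + 1), 8 * c * (U + (m + 1 : ℕ)) ^ (-(1 + p)) :=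
        sum_le_sum fun m _ => hterm m
    _ ≤ 8 * c * (U ^ (-p) / p) := by
        rw [← mul_sum]; gcongr; exact sum_range_rpow_neg_le hU hp _

lemma rpow_neg_mul_rpow_neg_le_of_two_mul_le {a b x y T : ℝ} (ha : a ≤ 2) (hb : 0 ≤ b)
    (hx : 0 < x) (h2x : 2 * x ≤ T) (hT : T ≤ x + y) :
    x ^ (-a) * y ^ (-b) ≤ 2 ^ b * x ^ (-2 : ℝ) / T ^ (a + b - 2) := by
  have hT0 : 0 < T := by linarith
  have hxa : x ^ (-a) ≤ T ^ (2 - a) * x ^ (-2 : ℝ) := by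
    rw [show -a = (2 - a) + -2 by ring, Real.rpow_add hx]
    gcongr
    linarith
  have hy : 0 < y := by linarith
  have hyb : y ^ (-b) ≤ (T / 2) ^ (-b) :=
    Real.rpow_le_rpow_of_nonpos (by positivity) (by linarith) (by linarith)
  calc x ^ (-a) * y ^ (-b)
      ≤ T ^ (2 - a) * x ^ (-2 : ℝ) * (T / 2) ^ (-b) := by
        gcongr
    _ = 2 ^ b * x ^ (-2 : ℝ) * (T ^ (2 - a) * T ^ (-b)) := by
        rw [Real.div_rpow hT0.le zero_le_two, Real.rpow_neg zero_le_two, div_inv_eq_mul]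
        ring
    _ = 2 ^ b * x ^ (-2 : ℝ) / T ^ (a + b - 2) := by
        rw [← Real.rpow_add hT0, div_eq_mul_inv, ← Real.rpow_neg hT0.le]
        ring_nf

lemma rpow_neg_mul_rpow_neg_le_of_le_three_mul {a b x y : ℝ} (hb : 0 ≤ b) (hx : 0 < x)
    (h : x ≤ 3 * y) : x ^ (-a) * y ^ (-b) ≤ 3 ^ b * x ^ (-(a + b)) := by
  have hyb : y ^ (-b) ≤ (x / 3) ^ (-b) :=
    Real.rpow_le_rpow_of_nonpos (by positivity) (by linarith) (by linarith)
  calc x ^ (-a) * y ^ (-b) ≤ x ^ (-a) * (x / 3) ^ (-b) := by gcongr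
    _ = 3 ^ b * x ^ (-(a + b)) := by
      rw [Real.div_rpow hx.le (by norm_num), Real.rpow_neg (by norm_num : (0 : ℝ) ≤ 3),
        neg_add, Real.rpow_add hx, div_inv_eq_mul]
      ring

lemma rpow_neg_mul_rpow_neg_le_regions {a b x y T : ℝ} (ha : a ≤ 2) (hb : b ≤ 2)
    (hab : 2 < a + b) (hx : 0 < x) (hy : 0 < y) (hT : 0 ≤ T) (hTxy : T ≤ x + y)
    (hxTy : x ≤ T + y) :
    x ^ (-a) * y ^ (-b)
      ≤ (2 ^ b * (if x ≤ T then x ^ (-2 : ℝ) else 0)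
          + 2 ^ a * (if y ≤ T then y ^ (-2 : ℝ) else 0)) / T ^ (a + b - 2)
        + 3 ^ b * (if T / 2 ≤ x then x ^ (-(a + b)) else 0) := by
  have hTp : 0 ≤ T ^ (a + b - 2) := Real.rpow_nonneg hT _
  have h1 : 0 ≤ 2 ^ b * (if x ≤ T then x ^ (-2 : ℝ) else 0) := by positivity
  have h2 : 0 ≤ 2 ^ a * (if y ≤ T then y ^ (-2 : ℝ) else 0) := by positivity
  have h3 : 0 ≤ 3 ^ b * (if T / 2 ≤ x then x ^ (-(a + b)) else 0) := by positivity
  rcases le_or_gt (2 * x) T with h2x | h2x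
  · have hbound := rpow_neg_mul_rpow_neg_le_of_two_mul_le (b := b) (y := y) ha (by linarith)
      hx h2x hTxy
    rw [if_pos (by linarith : x ≤ T)]
    have := div_le_div_of_nonneg_right (le_add_of_nonneg_right (a := 2 ^ b * x ^ (-2 : ℝ)) h2) hTp
    linarith
  rcases le_or_gt (2 * y) T with h2y | h2y
  · have hbound := rpow_neg_mul_rpow_neg_le_of_two_mul_le (b := a) (y := x) hb (by linarith) hy h2y
      (by linarith)
    rw [if_pos (by linarith : y ≤ T)]
    have := div_le_div_of_nonneg_right (le_add_of_nonneg_left (a := 2 ^ a * y ^ (-2 : ℝ)) h1) hTp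
    rw [mul_comm, add_comm b] at hbound
    linarith
  · have hbound := rpow_neg_mul_rpow_neg_le_of_le_three_mul (a := a) (b := b) (y := y)
      (by linarith) hx (by linarith)
    rw [if_pos (by linarith : T / 2 ≤ x)]
    linarith [div_nonneg (add_nonneg h1 h2) hTp]

lemma sum_filter_jap2_sub_rpow_neg_two_le {T : ℝ} (hT : 1 ≤ T) (n : ℤ × ℤ) (F : Finset (ℤ × ℤ)) :
    ∑ k ∈ F with jap2 (n - k) ≤ T, jap2 (n - k) ^ (-2 : ℝ) ≤ 36 * (1 + Real.log T) := by
  have hreindex := sum_image (s := F) (g := fun k => n - k)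
    (f := fun l => if jap2 l ≤ T then jap2 l ^ (-2 : ℝ) else 0)
    (fun _ _ _ _ h => sub_right_injective h)
  rw [sum_filter, ← hreindex, ← sum_filter]
  exact sum_jap2_rpow_neg_two_le hT _

theorem exists_sum_jap2_conv_le {a b : ℝ} (ha : a ≤ 2) (hb : b ≤ 2) (hab : 2 < a + b) :
    ∃ C > 0, ∀ (n : ℤ × ℤ) (F : Finset (ℤ × ℤ)),
      ∑ k ∈ F, jap2 k ^ (-a) * jap2 (n - k) ^ (-b)
        ≤ C * (1 + Real.log (jap2 n)) / jap2 n ^ (a + b - 2) := by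
  set p := a + b - 2
  have hp : 0 < p := by linarith
  set K := 8 * 3 ^ (2 + p) * 2 ^ p / p with hK
  refine ⟨36 * (2 ^ b + 2 ^ a) + 3 ^ b * K, by positivity, fun n F => ?_⟩
  set T := jap2 n
  set L := 1 + Real.log T
  have hT : 1 ≤ T := one_le_jap2 n
  have hL : 1 ≤ L := by linarith [Real.log_nonneg hT]
  have hTp : 0 < T ^ p := by positivity
  have htail : ∑ k ∈ F with T / 2 ≤ jap2 k, jap2 k ^ (-(a + b)) ≤ K / T ^ p := by
    rw [show a + b = 2 + p by ring]
    refine (sum_jap2_rpow_neg_tail_le (U := T / 2) (by positivity) hp F).trans_eq ?_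
    rw [Real.rpow_neg (by positivity), Real.div_rpow (by positivity) zero_le_two, hK]
    field_simp
  calc ∑ k ∈ F, jap2 k ^ (-a) * jap2 (n - k) ^ (-b)
      ≤ ∑ k ∈ F, ((2 ^ b * (if jap2 k ≤ T then jap2 k ^ (-2 : ℝ) else 0)
          + 2 ^ a * (if jap2 (n - k) ≤ T then jap2 (n - k) ^ (-2 : ℝ) else 0)) / T ^ p
          + 3 ^ b * (if T / 2 ≤ jap2 k then jap2 k ^ (-(a + b)) else 0)) := by
        refine sum_le_sum fun k _ => rpow_neg_mul_rpow_neg_le_regions ha hb hab (jap2_pos k)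
          (jap2_pos (n - k)) (by positivity) ?_ ?_
        · simpa using jap2_add_le k (n - k)
        · simpa using jap2_sub_le n (n - k)
    _ = (2 ^ b * ∑ k ∈ F with jap2 k ≤ T, jap2 k ^ (-2 : ℝ)
          + 2 ^ a * ∑ k ∈ F with jap2 (n - k) ≤ T, jap2 (n - k) ^ (-2 : ℝ)) / T ^ p
          + 3 ^ b * ∑ k ∈ F with T / 2 ≤ jap2 k, jap2 k ^ (-(a + b)) := by
        simp only [sum_filter, mul_sum, ← sum_add_distrib, sum_div]
    _ ≤ (2 ^ b * (36 * L) + 2 ^ a * (36 * L)) / T ^ p + 3 ^ b * (K / T ^ p) := by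
        gcongr
        · exact sum_jap2_rpow_neg_two_le hT F
        · exact sum_filter_jap2_sub_rpow_neg_two_le hT n F
    _ = (36 * (2 ^ b + 2 ^ a) * L + 3 ^ b * K) / T ^ p := by ring
    _ ≤ (36 * (2 ^ b + 2 ^ a) + 3 ^ b * K) * L / T ^ p := by
        gcongr
        nlinarith [show 0 < 3 ^ b * K by positivity]

lemma rpow_neg_le_rpow_neg_sub_div {s ρ W x : ℝ} (hρ : 0 ≤ ρ) (hW : 0 < W) (hWx : W ≤ x) :
    x ^ (-s) ≤ x ^ (-(s - ρ)) / W ^ ρ := by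
  have hx : 0 < x := hW.trans_le hWx
  rw [show -s = -(s - ρ) - ρ by ring, Real.rpow_sub hx]
  gcongr

lemma indicator_le_add_div_japR_rpow {δ ρ M : ℝ} (hρ : 0 ≤ ρ) (hM : 0 ≤ M) (n k : ℤ × ℤ) :
    Set.indicator {k : ℤ × ℤ | M ≤ max (norm2 k) (norm2 (n - k))}
        (fun k => jap2 k ^ (-δ) * jap2 (n - k) ^ (-(2 : ℝ))) k
      ≤ (jap2 k ^ (-(δ - ρ)) * jap2 (n - k) ^ (-(2 : ℝ))
          + jap2 k ^ (-δ) * jap2 (n - k) ^ (-(2 - ρ))) / japR M ^ ρ := by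
  have hk := jap2_pos k
  have hnk := jap2_pos (n - k)
  have hW : 0 < japR M := japR_pos M
  have h1 : 0 ≤ jap2 k ^ (-(δ - ρ)) * jap2 (n - k) ^ (-(2 : ℝ)) := by positivity
  have h2 : 0 ≤ jap2 k ^ (-δ) * jap2 (n - k) ^ (-(2 - ρ)) := by positivity
  rw [Set.indicator_apply]
  split_ifs with hMk
  · rcases le_max_iff.mp (show M ≤ _ from hMk) with hMk | hMk
    · calc jap2 k ^ (-δ) * jap2 (n - k) ^ (-(2 : ℝ))
          ≤ jap2 k ^ (-(δ - ρ)) / japR M ^ ρ * jap2 (n - k) ^ (-(2 : ℝ)) := by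
            gcongr
            exact rpow_neg_le_rpow_neg_sub_div hρ hW (japR_le_jap2 hM hMk)
        _ ≤ _ := by rw [div_mul_eq_mul_div]; gcongr; linarith
    · calc jap2 k ^ (-δ) * jap2 (n - k) ^ (-(2 : ℝ))
          ≤ jap2 k ^ (-δ) * (jap2 (n - k) ^ (-(2 - ρ)) / japR M ^ ρ) := by
            gcongr
            exact rpow_neg_le_rpow_neg_sub_div hρ hW (japR_le_jap2 hM hMk)
        _ ≤ _ := by rw [← mul_div_assoc]; gcongr; linarith
  · positivity

theorem stmt17_general (δ ρ : ℝ) (hδ2 : δ ≤ 2) (hρ0 : 0 ≤ ρ) (hρδ : ρ < δ) :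
    ∃ C : ℝ, 0 < C ∧ ∀ (n : ℤ × ℤ) (M : ℝ), 0 ≤ M →
      (∑' k : ℤ × ℤ,
        Set.indicator {k : ℤ × ℤ | M ≤ max (norm2 k) (norm2 (n - k))}
          (fun k => jap2 k ^ (-δ) * jap2 (n - k) ^ (-(2 : ℝ))) k)
        ≤ C * (1 + Real.log (jap2 n)) / (jap2 n ^ (δ - ρ) * japR M ^ ρ) := by
  obtain ⟨C₁, hC₁, H₁⟩ := exists_sum_jap2_conv_le (a := δ - ρ) (b := 2) (by linarith) le_rfl
    (by linarith)
  obtain ⟨C₂, hC₂, H₂⟩ := exists_sum_jap2_conv_le (a := δ) (b := 2 - ρ) hδ2 (by linarith)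
    (by linarith)
  refine ⟨C₁ + C₂, by positivity, fun n M hM => tsum_le_of_sum_le' ?_ fun u => ?_⟩
  · have := jap2_pos n
    have := japR_pos M
    have := Real.log_nonneg (one_le_jap2 n)
    positivity
  calc _ ≤ ∑ k ∈ u, (jap2 k ^ (-(δ - ρ)) * jap2 (n - k) ^ (-(2 : ℝ))
          + jap2 k ^ (-δ) * jap2 (n - k) ^ (-(2 - ρ))) / japR M ^ ρ :=
        sum_le_sum fun k _ => indicator_le_add_div_japR_rpow hρ0 hM n k
    _ = (∑ k ∈ u, jap2 k ^ (-(δ - ρ)) * jap2 (n - k) ^ (-(2 : ℝ))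
          + ∑ k ∈ u, jap2 k ^ (-δ) * jap2 (n - k) ^ (-(2 - ρ))) / japR M ^ ρ := by
        rw [← sum_div, sum_add_distrib]
    _ ≤ (C₁ * (1 + Real.log (jap2 n)) / jap2 n ^ (δ - ρ)
          + C₂ * (1 + Real.log (jap2 n)) / jap2 n ^ (δ - ρ)) / japR M ^ ρ := by
        refine div_le_div_of_nonneg_right (add_le_add ?_ ?_)
          (Real.rpow_nonneg (japR_pos M).le ρ)
        · simpa only [show δ - ρ + 2 - 2 = δ - ρ by ring] using H₁ n u
        · simpa only [show δ + (2 - ρ) - 2 = δ - ρ by ring] using H₂ n u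
    _ = _ := by rw [← add_div, div_div, ← add_mul]

/-- two-dimensional discrete convolution estimate. For
`δ ∈ (0,2]`, `M ≥ 0`, `ρ ∈ [0,δ)` and all `n ∈ ℤ²`,
`Σ_{k+ℓ=n, max{|k|,|ℓ|}≥M} ⟨k⟩^{-δ} ⟨ℓ⟩^{-2} ≤ C(δ,ρ) log⟨n⟩ / (⟨n⟩^{δ−ρ} ⟨M⟩^ρ)`,
where `log⟨n⟩` is understood to be bounded below by a positive constant
(formalized as `1 + log⟨n⟩`). -/
theorem stmt17 (δ ρ : ℝ) (hδ0 : 0 < δ) (hδ2 : δ ≤ 2) (hρ0 : 0 ≤ ρ) (hρδ : ρ < δ) :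
    ∃ C : ℝ, 0 < C ∧ ∀ (n : ℤ × ℤ) (M : ℝ), 0 ≤ M →
      (∑' k : ℤ × ℤ,
        Set.indicator {k : ℤ × ℤ | M ≤ max (norm2 k) (norm2 (n - k))}
          (fun k => jap2 k ^ (-δ) * jap2 (n - k) ^ (-(2 : ℝ))) k)
        ≤ C * (1 + Real.log (jap2 n)) / (jap2 n ^ (δ - ρ) * japR M ^ ρ) :=
  stmt17_general δ ρ hδ2 hρ0 hρδ
end
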